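/- arXiv:1908.07444 — 2 statements merged into one kernel-verified Lean document; each statement's English description precedes it below -/
import Mathlib

section
/- Let ν be a Jacobi measure with parameters 0 < l < 1 and β > 1, let d > 0, and define H(τ) := d^{-1}∫_l^1 t²/((Re τ + t)² + (Im τ)²) dν(t) and F(τ) := −τ + d^{-1}∫_l^1 t τ/(τ + t) dν(t). Then for every τ ∈ ℂ with Re τ ≤ −1 and τ ≠ −1 one has H(τ) ≤ d_+/d, and Im F(τ) = −Im τ·(1 − H(τ)); consequently, if d > d_+, then for all such τ, |Im F(τ)| ≥ (1 − d_+/d)·|Im τ|, so Im F(τ) ≠ 0 whenever Im τ ≠ 0. -/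
open MeasureTheory Set

noncomputable def jacobiDensity (l β Z : ℝ) (f : ℝ → ℝ) : ℝ → ℝ :=
  Set.indicator (Set.Icc l 1) (fun t => Z⁻¹ * (1 - t) ^ β * f t)

/-- `ν` is a Jacobi measure with parameters `l`, `β`, profile `f` and normalizing constant `Z`. -/
structure IsJacobi (ν : Measure ℝ) (l β : ℝ) (f : ℝ → ℝ) (Z : ℝ) : Prop where
  l_pos : 0 < l
  l_lt_one : l < 1
  f_C1 : ContDiffOn ℝ 1 f (Set.Icc l 1)
  f_pos : ∀ t ∈ Set.Icc l 1, 0 < f t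
  Z_def : Z = ∫ t in Set.Icc l 1, (1 - t) ^ β * f t
  eq_density : ν = volume.withDensity (fun t => ENNReal.ofReal (jacobiDensity l β Z f t))
  prob : IsProbabilityMeasure ν

/-- Stieltjes transform of a measure on ℝ. -/
noncomputable def stieltjes (μ : Measure ℝ) (z : ℂ) : ℂ := ∫ x, ((x : ℂ) - z)⁻¹ ∂μ

/-!
For `Re τ ≤ -1` and `t ≤ 1` one has `|τ + t| ≥ 1 - t`, so the integrand of `H(τ)` is dominated
by `t² / (1 - t)²`; the latter is `ν`-integrable because the Jacobi density vanishes like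
`(1 - t)^β` at `1` and `β - 2 > -1`. Since `Im (t τ / (τ + t)) = Im τ · t² / |τ + t|²`,
integrating gives `Im F(τ) = -Im τ · (1 - H(τ))`, and `1 - H(τ) ≥ 1 - d₊/d`.
-/

section

variable {μ : Measure ℝ} {τ : ℂ}

theorem im_ofReal_mul_div_add_ofReal (τ : ℂ) (t : ℝ) :
    ((t : ℂ) * τ / (τ + t)).im = τ.im * (t ^ 2 / ((τ.re + t) ^ 2 + τ.im ^ 2)) := by
  simp only [Complex.div_im, Complex.normSq_apply, Complex.mul_re, Complex.mul_im, Complex.add_re,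
    Complex.add_im, Complex.ofReal_re, Complex.ofReal_im]
  ring

theorem one_sub_sq_le_re_add_sq_add_im_sq (hτ : τ.re ≤ -1) {t : ℝ} (ht : t ≤ 1) :
    (1 - t) ^ 2 ≤ (τ.re + t) ^ 2 + τ.im ^ 2 := by
  nlinarith [sq_nonneg τ.im]

theorem norm_add_one_le_norm_add_ofReal (hτ : τ.re ≤ -1) {t : ℝ} (ht : t ≤ 1) :
    ‖τ + 1‖ ≤ ‖τ + t‖ := by
  rw [← sq_le_sq₀ (norm_nonneg _) (norm_nonneg _), Complex.sq_norm, Complex.sq_norm,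
    Complex.normSq_apply, Complex.normSq_apply]
  simp only [Complex.add_re, Complex.add_im, Complex.one_re, Complex.one_im, Complex.ofReal_re,
    Complex.ofReal_im, add_zero]
  nlinarith

theorem integral_div_re_add_sq_add_im_sq_le (hτ : τ.re ≤ -1) (hμ : ∀ᵐ t ∂μ, t < 1)
    (hint : Integrable (fun t => t ^ 2 / (1 - t) ^ 2) μ) :
    ∫ t, t ^ 2 / ((τ.re + t) ^ 2 + τ.im ^ 2) ∂μ ≤ ∫ t, t ^ 2 / (1 - t) ^ 2 ∂μ := by
  refine integral_mono_of_nonneg (.of_forall fun t => by positivity) hint ?_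
  filter_upwards [hμ] with t ht
  have h1t : 0 < 1 - t := sub_pos.2 ht
  exact div_le_div_of_nonneg_left (sq_nonneg t) (by positivity)
    (one_sub_sq_le_re_add_sq_add_im_sq hτ ht.le)

theorem integrable_ofReal_mul_div_add_ofReal [IsFiniteMeasure μ] (hτ : τ.re ≤ -1) (hτ1 : τ ≠ -1)
    (hμ : ∀ᵐ t ∂μ, |t| ≤ 1) : Integrable (fun t : ℝ => (t : ℂ) * τ / (τ + t)) μ := by
  have hpos : 0 < ‖τ + 1‖ := norm_pos_iff.2 fun h => hτ1 (eq_neg_of_add_eq_zero_left h)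
  refine Integrable.of_bound
    (by fun_prop : Measurable fun t : ℝ => (t : ℂ) * τ / (τ + t)).aestronglyMeasurable
    (‖τ‖ / ‖τ + 1‖) ?_
  filter_upwards [hμ] with t ht
  rw [norm_div, norm_mul, Complex.norm_real, Real.norm_eq_abs]
  calc |t| * ‖τ‖ / ‖τ + t‖ ≤ 1 * ‖τ‖ / ‖τ + 1‖ := by
        gcongr
        exact norm_add_one_le_norm_add_ofReal hτ (abs_le.1 ht).2
    _ = ‖τ‖ / ‖τ + 1‖ := by rw [one_mul]

theorem im_integral_ofReal_mul_div_add_ofReal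
    (hint : Integrable (fun t : ℝ => (t : ℂ) * τ / (τ + t)) μ) :
    (∫ t, (t : ℂ) * τ / (τ + t) ∂μ).im = τ.im * ∫ t, t ^ 2 / ((τ.re + t) ^ 2 + τ.im ^ 2) ∂μ := by
  rw [← integral_const_mul, ← RCLike.im_to_complex, ← integral_im hint]
  simp only [RCLike.im_to_complex, im_ofReal_mul_div_add_ofReal]

end

namespace IsJacobi

variable {ν : Measure ℝ} {l β Z : ℝ} {f : ℝ → ℝ}

theorem aemeasurable_jacobiDensity (hν : IsJacobi ν l β f Z) :
    AEMeasurable (jacobiDensity l β Z f) volume :=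
  (aemeasurable_indicator_iff measurableSet_Icc).2 <|
    (by fun_prop : Measurable fun t : ℝ => Z⁻¹ * (1 - t) ^ β).aemeasurable.mul
      (hν.f_C1.continuousOn.aemeasurable measurableSet_Icc)

theorem ae_mem_Icc (hν : IsJacobi ν l β f Z) : ∀ᵐ t ∂ν, t ∈ Icc l 1 := by
  rw [hν.eq_density, ae_withDensity_iff' hν.aemeasurable_jacobiDensity.ennreal_ofReal]
  refine Filter.Eventually.of_forall fun t ht => ?_
  by_contra hmem
  simp [jacobiDensity, indicator_of_notMem hmem] at ht

theorem ae_lt_one (hν : IsJacobi ν l β f Z) : ∀ᵐ t ∂ν, t < 1 := by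
  have hac : ν ≪ volume := hν.eq_density ▸ withDensity_absolutelyContinuous _ _
  filter_upwards [hν.ae_mem_Icc, hac.ae_le (Measure.ae_ne volume 1)] with t ht ht1
  exact ht.2.lt_of_ne ht1

theorem ae_abs_le_one (hν : IsJacobi ν l β f Z) : ∀ᵐ t ∂ν, |t| ≤ 1 :=
  hν.ae_mem_Icc.mono fun _ ht => abs_le.2 ⟨by linarith [hν.l_pos, ht.1], ht.2⟩

/-- The bound is asked for on `Ico l 1` only, since `(1 - t) ^ γ` is `0` at `t = 1` for `γ < 0`. -/
theorem integrable_of_abs_le_rpow (hν : IsJacobi ν l β f Z) {g : ℝ → ℝ}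
    (hg : AEStronglyMeasurable g volume) {C γ : ℝ} (hγ : -1 < β + γ)
    (hgC : ∀ t ∈ Ico l 1, |g t| ≤ C * (1 - t) ^ γ) : Integrable g ν := by
  obtain ⟨M, hM⟩ := isCompact_Icc.exists_bound_of_continuousOn hν.f_C1.continuousOn
  have hbound : IntegrableOn (fun t => |Z⁻¹| * M * C * (1 - t) ^ (β + γ)) (Ico l 1) := by
    have := (intervalIntegral.intervalIntegrable_rpow' hγ (a := 1 - l) (b := 0)).comp_sub_left 1
    rw [sub_sub_cancel, sub_zero,
      intervalIntegrable_iff_integrableOn_Ico_of_le hν.l_lt_one.le] at this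
    exact this.const_mul _
  rw [hν.eq_density]
  have hρ : AEMeasurable (fun t => (jacobiDensity l β Z f t).toNNReal) volume :=
    measurable_real_toNNReal.comp_aemeasurable hν.aemeasurable_jacobiDensity
  refine (integrable_withDensity_iff_integrable_smul₀ hρ).2 <|
    (hbound.integrable_indicator measurableSet_Ico).mono' (hρ.aestronglyMeasurable.smul hg) ?_
  filter_upwards [Measure.ae_ne volume 1] with t ht1
  by_cases ht : t ∈ Ico l 1
  · have h1t : 0 < 1 - t := sub_pos.2 ht.2
    have hft : |f t| ≤ M := hM t (Ico_subset_Icc_self ht)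
    have hgt : |g t| ≤ C * (1 - t) ^ γ := hgC t ht
    rw [indicator_of_mem ht, NNReal.smul_def, smul_eq_mul, norm_mul, Real.norm_eq_abs,
      Real.norm_eq_abs, NNReal.abs_eq, Real.rpow_add h1t]
    calc ((jacobiDensity l β Z f t).toNNReal : ℝ) * |g t|
        ≤ |Z⁻¹| * (1 - t) ^ β * |f t| * |g t| := by
          gcongr
          refine (Real.coe_toNNReal_le _).trans_eq ?_
          rw [jacobiDensity, indicator_of_mem (Ico_subset_Icc_self ht), abs_mul, abs_mul,
            abs_of_pos (Real.rpow_pos_of_pos h1t β)]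
      _ ≤ |Z⁻¹| * (1 - t) ^ β * M * (C * (1 - t) ^ γ) := by
          gcongr
          exact mul_nonneg (by positivity) ((abs_nonneg _).trans hft)
      _ = _ := by ring
  · have ht' : t ∉ Icc l 1 := fun h => ht ⟨h.1, h.2.lt_of_ne ht1⟩
    simp [jacobiDensity, indicator_of_notMem ht, indicator_of_notMem ht']

theorem integrable_sq_div_one_sub_sq (hν : IsJacobi ν l β f Z) (hβ : 1 < β) :
    Integrable (fun t => t ^ 2 / (1 - t) ^ 2) ν := by
  refine hν.integrable_of_abs_le_rpow
    (by fun_prop : Measurable fun t : ℝ => t ^ 2 / (1 - t) ^ 2).aestronglyMeasurable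
    (C := 1) (γ := -2) (by linarith) fun t ht => ?_
  have h1t : 0 < 1 - t := sub_pos.2 ht.2
  rw [one_mul, Real.rpow_neg h1t.le, Real.rpow_two, abs_of_nonneg (by positivity), ← one_div]
  gcongr
  nlinarith [hν.l_pos, ht.1, ht.2]

end IsJacobi

/-- for `Re τ ≤ −1`, `τ ≠ −1`, one has `H(τ) ≤ d₊/d` and
`Im F(τ) = −Im τ · (1 − H(τ))`; hence if `d > d₊` then
`|Im F(τ)| ≥ (1 − d₊/d)|Im τ|`, so `Im F(τ) ≠ 0` when `Im τ ≠ 0`. -/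
theorem no_solution_outside_spectrum
    (ν : Measure ℝ) (l β : ℝ) (f : ℝ → ℝ) (Z : ℝ)
    (hν : IsJacobi ν l β f Z) (hβ : 1 < β)
    (d : ℝ) (hd : 0 < d)
    (dplus : ℝ) (hdplus : dplus = ∫ t, t ^ 2 / (1 - t) ^ 2 ∂ν)
    (H : ℂ → ℝ) (F : ℂ → ℂ)
    (hH : ∀ τ : ℂ, H τ = d⁻¹ * ∫ t, t ^ 2 / ((τ.re + t) ^ 2 + τ.im ^ 2) ∂ν)
    (hF : ∀ τ : ℂ, F τ = -τ + (d : ℂ)⁻¹ * ∫ t, (t : ℂ) * τ / (τ + t) ∂ν) :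
    ∀ τ : ℂ, τ.re ≤ -1 → τ ≠ -1 →
      (H τ ≤ dplus / d ∧ (F τ).im = -τ.im * (1 - H τ)) ∧
      (dplus < d →
        (1 - dplus / d) * |τ.im| ≤ |(F τ).im| ∧ (τ.im ≠ 0 → (F τ).im ≠ 0)) := by
  intro τ hre hne
  have := hν.prob
  have hHle : H τ ≤ dplus / d := by
    rw [hH, hdplus, div_eq_inv_mul]
    exact mul_le_mul_of_nonneg_left (integral_div_re_add_sq_add_im_sq_le hre hν.ae_lt_one
      (hν.integrable_sq_div_one_sub_sq hβ)) (inv_nonneg.2 hd.le)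
  have hImF : (F τ).im = -τ.im * (1 - H τ) := by
    rw [hF, hH, Complex.add_im, Complex.neg_im, ← Complex.ofReal_inv, Complex.im_ofReal_mul,
      im_integral_ofReal_mul_div_add_ofReal
        (integrable_ofReal_mul_div_add_ofReal hre hne hν.ae_abs_le_one)]
    ring
  refine ⟨⟨hHle, hImF⟩, fun hlt => ?_⟩
  have hgap : 0 < 1 - dplus / d := sub_pos.2 ((div_lt_one hd).2 hlt)
  have hbound : (1 - dplus / d) * |τ.im| ≤ |(F τ).im| :=
    calc (1 - dplus / d) * |τ.im| ≤ (1 - H τ) * |τ.im| := by gcongr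
      _ ≤ |1 - H τ| * |τ.im| := by gcongr; exact le_abs_self _
      _ = |(F τ).im| := by rw [hImF, abs_mul, abs_neg, mul_comm]
  exact ⟨hbound, fun him => abs_pos.1 ((mul_pos hgap (abs_pos.2 him)).trans_le hbound)⟩
end

section
/- Let ν be a Jacobi measure with parameters 0 < l < 1 and β > 1, let d > 0, let z = E + iη with η > 0, and let m ∈ ℂ with Im m > 0 satisfy the self-consistent equation m = (−z + d^{-1}∫_l^1 t/(1 + t m) dν(t))^{-1}. Set R₂(z) := d^{-1}∫_l^1 t²|m|²/|t m + 1|² dν(t). Then 1 − R₂(z) = η·|m|²/Im m, and if moreover C^{-1} η ≤ Im m ≤ C η for some constant C ≥ 1, then |m|²/C ≤ 1 − R₂(z) ≤ C·|m|²; in particular, if in addition |m| ≥ 1, then 0 ≤ R₂(z) ≤ 1 − 1/C. -/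
open MeasureTheory Set

/-!
Taking imaginary parts in the self-consistent equation, with `Im (1/m) = -Im m / |m|²` and
`Im (t / (1 + t m)) = -Im m · t² / |1 + t m|²`, gives
`Im m / |m|² = η + Im m · d⁻¹ ∫ t² / |1 + t m|² dν`; multiplying by `|m|² / Im m` turns this into
`1 = η |m|² / Im m + R₂`. The integrals are genuine (not junk) because `|t / (1 + t m)| ≤ 1 / Im m`
for every real `t` and `ν` is finite.
-/

section SelfConsistent

variable {m : ℂ}

theorem norm_ofReal_div_one_add_mul_le (hm : 0 < m.im) (t : ℝ) :
    ‖(t : ℂ) / (1 + t * m)‖ ≤ 1 / m.im := by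
  have him : |t| * m.im ≤ ‖1 + (t : ℂ) * m‖ := by
    calc |t| * m.im = |(1 + (t : ℂ) * m).im| := by simp [abs_mul, abs_of_pos hm]
      _ ≤ ‖1 + (t : ℂ) * m‖ := Complex.abs_im_le_norm _
  rw [norm_div, Complex.norm_real, Real.norm_eq_abs]
  refine div_le_of_le_mul₀ (norm_nonneg _) (by positivity) ?_
  rwa [one_div, ← div_eq_inv_mul, le_div_iff₀ hm]

theorem integrable_ofReal_div_one_add_mul {ν : Measure ℝ} [IsFiniteMeasure ν] (hm : 0 < m.im) :
    Integrable (fun t : ℝ => (t : ℂ) / (1 + t * m)) ν :=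
  Integrable.of_bound (by fun_prop : Measurable _).aestronglyMeasurable (1 / m.im)
    (Filter.Eventually.of_forall (norm_ofReal_div_one_add_mul_le hm))

theorem im_ofReal_div_one_add_mul (t : ℝ) :
    ((t : ℂ) / (1 + t * m)).im = -m.im * (t ^ 2 / Complex.normSq (1 + t * m)) := by
  simp only [Complex.div_im, Complex.ofReal_re, Complex.ofReal_im, Complex.add_im,
    Complex.one_im, Complex.mul_im]
  ring

theorem im_integral_ofReal_div_one_add_mul {ν : Measure ℝ} [IsFiniteMeasure ν] (hm : 0 < m.im) :
    (∫ t, (t : ℂ) / (1 + t * m) ∂ν).im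
      = -m.im * ∫ t, t ^ 2 / Complex.normSq (1 + t * m) ∂ν := by
  rw [← integral_const_mul]
  refine (integral_im (integrable_ofReal_div_one_add_mul hm)).symm.trans ?_
  exact integral_congr_ae (Filter.Eventually.of_forall im_ofReal_div_one_add_mul)

theorem one_sub_integral_eq_of_self_consistent {ν : Measure ℝ} [IsFiniteMeasure ν] {d : ℝ} {z : ℂ}
    (hm : 0 < m.im) (hself : m = (-z + (d : ℂ)⁻¹ * ∫ t, (t : ℂ) / (1 + t * m) ∂ν)⁻¹) :
    1 - d⁻¹ * ∫ t, t ^ 2 * ‖m‖ ^ 2 / ‖(t * m + 1 : ℂ)‖ ^ 2 ∂ν = z.im * ‖m‖ ^ 2 / m.im := by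
  set J := ∫ t, t ^ 2 / Complex.normSq (1 + t * m) ∂ν
  have hR : ∫ t, t ^ 2 * ‖m‖ ^ 2 / ‖(t * m + 1 : ℂ)‖ ^ 2 ∂ν = Complex.normSq m * J := by
    rw [← integral_const_mul]
    refine integral_congr_ae (Filter.Eventually.of_forall fun t => ?_)
    simp only [Complex.sq_norm, add_comm _ (1 : ℂ)]
    ring
  have him : m⁻¹.im = -z.im + d⁻¹ * (∫ t, (t : ℂ) / (1 + t * m) ∂ν).im := by
    conv_lhs => rw [hself, inv_inv]
    rw [Complex.add_im, Complex.neg_im, ← Complex.ofReal_inv, Complex.im_ofReal_mul]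
  rw [Complex.inv_im, im_integral_ofReal_div_one_add_mul hm] at him
  have hnorm : Complex.normSq m ≠ 0 := (Complex.normSq_pos.mpr fun h => by simp [h] at hm).ne'
  rw [hR, Complex.sq_norm, eq_div_iff hm.ne']
  field_simp at him
  linear_combination (-1) * him

end SelfConsistent

theorem R2_estimate_general
    (ν : Measure ℝ) (l β : ℝ) (f : ℝ → ℝ) (Z : ℝ)
    (hν : IsJacobi ν l β f Z)
    (d : ℝ) (hd : 0 < d)
    (E η : ℝ) (z : ℂ) (hz : z = Complex.mk E η)
    (m : ℂ) (hm : 0 < m.im)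
    (hself : m = (-z + (d : ℂ)⁻¹ * ∫ t, (t : ℂ) / (1 + t * m) ∂ν)⁻¹)
    (R₂ : ℝ)
    (hR₂ : R₂ = d⁻¹ * ∫ t, t ^ 2 * ‖m‖ ^ 2 / ‖(t * m + 1 : ℂ)‖ ^ 2 ∂ν) :
    1 - R₂ = η * ‖m‖ ^ 2 / m.im ∧
    (∀ C : ℝ, 1 ≤ C → C⁻¹ * η ≤ m.im → m.im ≤ C * η →
      (‖m‖ ^ 2 / C ≤ 1 - R₂ ∧ 1 - R₂ ≤ C * ‖m‖ ^ 2) ∧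
      (1 ≤ ‖m‖ → 0 ≤ R₂ ∧ R₂ ≤ 1 - 1 / C)) := by
  have := hν.prob
  have key : 1 - R₂ = η * ‖m‖ ^ 2 / m.im := by
    rw [hR₂, one_sub_integral_eq_of_self_consistent hm hself, hz]
  refine ⟨key, fun C hC hη_le hle_η => ?_⟩
  have hC0 : 0 < C := by linarith
  have lower : ‖m‖ ^ 2 / C ≤ 1 - R₂ := by
    rw [key, div_le_div_iff₀ hC0 hm]
    nlinarith [sq_nonneg ‖m‖]
  have upper : 1 - R₂ ≤ C * ‖m‖ ^ 2 := by
    have : η ≤ C * m.im := by rwa [inv_mul_le_iff₀ hC0] at hη_le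
    rw [key, div_le_iff₀ hm]
    nlinarith [sq_nonneg ‖m‖]
  refine ⟨⟨lower, upper⟩, fun hm_one => ⟨?_, ?_⟩⟩
  · rw [hR₂]
    exact mul_nonneg (inv_nonneg.mpr hd.le) (integral_nonneg fun t => by positivity)
  · have : 1 / C ≤ ‖m‖ ^ 2 / C := by gcongr; exact one_le_pow₀ hm_one
    linarith

/-- `1 − R₂(z) = η|m|²/Im m`; if moreover `Im m ∼ η` (up to a constant `C`)
then `|m|²/C ≤ 1 − R₂(z) ≤ C|m|²`, and if additionally `|m| ≥ 1` then `R₂(z) ≤ 1 − 1/C`. -/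
theorem R2_estimate
    (ν : Measure ℝ) (l β : ℝ) (f : ℝ → ℝ) (Z : ℝ)
    (hν : IsJacobi ν l β f Z) (hβ : 1 < β)
    (d : ℝ) (hd : 0 < d)
    (E η : ℝ) (hη : 0 < η) (z : ℂ) (hz : z = Complex.mk E η)
    (m : ℂ) (hm : 0 < m.im)
    (hself : m = (-z + (d : ℂ)⁻¹ * ∫ t, (t : ℂ) / (1 + t * m) ∂ν)⁻¹)
    (R₂ : ℝ)
    (hR₂ : R₂ = d⁻¹ * ∫ t, t ^ 2 * ‖m‖ ^ 2 / ‖(t * m + 1 : ℂ)‖ ^ 2 ∂ν) :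
    1 - R₂ = η * ‖m‖ ^ 2 / m.im ∧
    (∀ C : ℝ, 1 ≤ C → C⁻¹ * η ≤ m.im → m.im ≤ C * η →
      (‖m‖ ^ 2 / C ≤ 1 - R₂ ∧ 1 - R₂ ≤ C * ‖m‖ ^ 2) ∧
      (1 ≤ ‖m‖ → 0 ≤ R₂ ∧ R₂ ≤ 1 - 1 / C)) :=
  R2_estimate_general ν l β f Z hν d hd E η z hz m hm hself R₂ hR₂
end
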